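/- Let d ≥ 3 be an integer. There exist δ ∈ (0,1) and C > 0 such that for every N > 0 there is a constant C_N > 0 with |g_t(x+h,y) − g_t(x,y)| ≤ C_N · (|h|/√t)^δ · t^{−d/2} · e^{−C|x−y|²/t} · (1 + √t/ρ(x))^{−N} · (1 + √t/ρ(y))^{−N} for all t > 0, all x, y ∈ ℝ^d and all h ∈ ℝ^d with |h| < √t. -/

import Mathlib

open MeasureTheory Real Set ENNReal

noncomputable section

abbrev Euc (d : ℕ) := EuclideanSpace ℝ (Fin d)

namespace Hermite

variable {d : ℕ}

/-- The critical radius function `ρ(x) = 1/(1+|x|)`. -/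
def rho (x : Euc d) : ℝ := 1 / (1 + ‖x‖)

/-- The Hermite heat kernel (Mehler kernel). -/
def heatKernel (t : ℝ) (x y : Euc d) : ℝ :=
  (2 * π * Real.sinh (2 * t)) ^ (-(d : ℝ) / 2) *
    Real.exp (-(1 / 4) *
      (‖x + y‖ ^ 2 * Real.tanh t + ‖x - y‖ ^ 2 * (Real.cosh t / Real.sinh t)))

/-- The Hermite heat semigroup `T_t f(x) = ∫ g_t(x,y) f(y) dy`. -/
def heatOp (f : Euc d → ℝ) (t : ℝ) (x : Euc d) : ℝ :=
  ∫ y, heatKernel t x y * f y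

/-- The Poisson kernel associated with the Hermite operator. -/
def poissonKernel (t : ℝ) (x y : Euc d) : ℝ :=
  (t / (2 * Real.sqrt π)) *
    ∫ u in Ioi (0 : ℝ), Real.exp (-(t ^ 2) / (4 * u)) * heatKernel u x y * u ^ (-(3 : ℝ) / 2)

/-- The Poisson semigroup `P_t f(x) = ∫ p_t(x,y) f(y) dy`. -/
def poissonOp (f : Euc d → ℝ) (t : ℝ) (x : Euc d) : ℝ :=
  ∫ y, poissonKernel t x y * f y

/-- The heat maximal function `M_L f(x) = sup_{t>0} |T_t f(x)|` (with values in `ℝ≥0∞`). -/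
def heatMax (f : Euc d → ℝ) (x : Euc d) : ℝ≥0∞ :=
  ⨆ (t : ℝ) (_ : 0 < t), ENNReal.ofReal |heatOp f t x|

/-- The nontangential Poisson maximal function
`f_L^*(x) = sup { |P_t f(y)| : t > 0, |x - y| < t }`. -/
def ntMax (f : Euc d → ℝ) (x : Euc d) : ℝ≥0∞ :=
  ⨆ (y : Euc d) (t : ℝ) (_ : dist x y < t), ENNReal.ofReal |poissonOp f t y|

/-- `|∇_L P_t f(y)|² = |∂_t P_t f(y)|² + Σ_j |(∂_{y_j} + y_j) P_t f(y)|²`. -/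
def gradSq (f : Euc d → ℝ) (t : ℝ) (y : Euc d) : ℝ :=
  (deriv (fun s => poissonOp f s y) t) ^ 2 +
    ∑ j : Fin d,
      (fderiv ℝ (fun z => poissonOp f t z) y (EuclideanSpace.single j 1)
        + y j * poissonOp f t y) ^ 2

/-- The Lusin integrand `t^{1-d} |∇_L P_t f(y)|²` at `q = (y,t)`. -/
def lusinIntegrand (f : Euc d → ℝ) (q : Euc d × ℝ) : ℝ≥0∞ :=
  ENNReal.ofReal (q.2 ^ ((1 : ℝ) - d) * gradSq f q.2 q.1)

/-- The cone `Γ(x) = {(y,t) : |x-y| < t}`. -/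
def cone (x : Euc d) : Set (Euc d × ℝ) := {q | dist x q.1 < q.2}

/-- The Lusin area integral `S f(x)`. -/
def lusinS (f : Euc d → ℝ) (x : Euc d) : ℝ≥0∞ :=
  (∫⁻ q in cone x, lusinIntegrand f q) ^ (1 / 2 : ℝ)

/-- The `L^p` quasi-norm of an `ℝ≥0∞`-valued function. -/
def lpNorm (p : ℝ) (g : Euc d → ℝ≥0∞) : ℝ≥0∞ :=
  (∫⁻ x, g x ^ p) ^ (1 / p)


set_option maxHeartbeats 1000000

lemma sinh_le_mul_cosh (t : ℝ) (ht : 0 ≤ t) : Real.sinh t ≤ t * Real.cosh t := by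
  have hmono : MonotoneOn (fun u : ℝ => u * Real.cosh u - Real.sinh u) (Set.Ici 0) := by
    apply monotoneOn_of_deriv_nonneg (convex_Ici 0)
    · exact ((continuous_id.mul Real.continuous_cosh).sub Real.continuous_sinh).continuousOn
    · intro u _
      exact ((differentiableAt_id.mul Real.differentiable_cosh.differentiableAt).sub
        Real.differentiable_sinh.differentiableAt).differentiableWithinAt
    · intro u hu
      rw [interior_Ici, Set.mem_Ioi] at hu
      have H : HasDerivAt (fun u : ℝ => u * Real.cosh u - Real.sinh u) (u * Real.sinh u) u := by
        have h1 := ((hasDerivAt_id u).mul (Real.hasDerivAt_cosh u)).sub (Real.hasDerivAt_sinh u)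
        refine h1.congr_deriv ?_
        simp only [id, one_mul]; ring
      rw [H.deriv]
      exact mul_nonneg hu.le (Real.sinh_nonneg_iff.2 hu.le)
  have := hmono (Set.self_mem_Ici) (Set.mem_Ici.2 ht) ht
  simp at this
  linarith


lemma mul_cosh_le_sinh {t : ℝ} (ht : 0 ≤ t) : t * Real.cosh t ≤ (1 + t) * Real.sinh t := by
  have h1 : Real.cosh t - Real.sinh t = Real.exp (-t) := Real.cosh_sub_sinh t
  have h2 : t * Real.exp (-t) ≤ Real.sinh t := by
    rw [Real.sinh_eq]
    have h3 : 1 + 2*t ≤ Real.exp (2*t) := by linarith [Real.add_one_le_exp (2*t)]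
    have h4 : Real.exp (-t) * Real.exp t = 1 := by rw [← Real.exp_add]; simp
    have h5 : Real.exp (-t) * Real.exp (2*t) = Real.exp t := by rw [← Real.exp_add]; ring_nf
    nlinarith [Real.exp_pos t, Real.exp_pos (-t)]
  nlinarith [h2]

lemma tanh_pos' {t : ℝ} (ht : 0 < t) : 0 < Real.tanh t := by
  rw [Real.tanh_eq_sinh_div_cosh]
  exact div_pos (Real.sinh_pos_iff.2 ht) (Real.cosh_pos t)

lemma tanh_le_one' {t : ℝ} (ht : 0 ≤ t) : Real.tanh t ≤ 1 := by
  rw [Real.tanh_eq_sinh_div_cosh, div_le_one (Real.cosh_pos t)]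
  nlinarith [Real.cosh_sub_sinh t, Real.exp_pos (-t)]

lemma half_le_tanh {t : ℝ} (ht : 1 ≤ t) : 1/2 ≤ Real.tanh t := by
  rw [Real.tanh_eq_sinh_div_cosh, le_div_iff₀ (Real.cosh_pos t)]
  have h1 : Real.cosh t - Real.sinh t = Real.exp (-t) := Real.cosh_sub_sinh t
  have h3 : (3:ℝ) ≤ Real.exp (2*t) := by
    calc (3:ℝ) ≤ 1 + 2*t := by linarith
    _ ≤ Real.exp (2*t) := by linarith [Real.add_one_le_exp (2*t)]
  have h4 : Real.exp (-t) * Real.exp (2*t) = Real.exp t := by rw [← Real.exp_add]; ring_nf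
  have h2 : Real.cosh t + Real.sinh t = Real.exp t := Real.cosh_add_sinh t
  nlinarith [Real.exp_pos (-t), Real.exp_pos t]


lemma self_le_mul_tanh {t : ℝ} (ht : 0 < t) : t ≤ (1 + t) * Real.tanh t := by
  rw [Real.tanh_eq_sinh_div_cosh, ← mul_div_assoc, le_div_iff₀ (Real.cosh_pos t)]
  linarith [mul_cosh_le_sinh ht.le]

lemma log_factor_bound {N t s : ℝ} (hN : 0 < N) (ht : 0 < t) (hs : 0 ≤ s) :
    N * Real.log (1 + Real.sqrt t * (1 + s)) ≤
      s ^ 2 * Real.tanh t / 16 + (9 * N ^ 2 + N + 1) + t / 4 := by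
  set T := Real.tanh t with hTdef
  have hT : 0 < T := tanh_pos' ht
  have hT1 : T ≤ 1 := tanh_le_one' ht.le
  have hsq : Real.sqrt t ^ 2 = t := Real.sq_sqrt ht.le
  have hsqrtnn : 0 ≤ Real.sqrt t := Real.sqrt_nonneg t
  rcases le_total t 1 with hle | hge
  · -- small time
    have hlog : Real.log (1 + Real.sqrt t * (1 + s)) ≤ Real.sqrt t * (1 + s) := by
      have := Real.log_le_sub_one_of_pos (x := 1 + Real.sqrt t * (1 + s))
        (by positivity)
      linarith
    have hs1 : Real.sqrt t ≤ 1 := by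
      rw [show (1:ℝ) = Real.sqrt 1 by simp]
      exact Real.sqrt_le_sqrt hle
    have key : N * Real.sqrt t * s * T ≤ s ^ 2 * T ^ 2 / 16 + 4 * N ^ 2 * t := by
      nlinarith [sq_nonneg (s * T / 4 - 2 * N * Real.sqrt t)]
    have h1 : t ≤ (1 + t) * T := self_le_mul_tanh ht
    have key2 : N * Real.sqrt t * s ≤ s ^ 2 * T / 16 + 4 * N ^ 2 * (1 + t) := by
      have h2 : 4 * N ^ 2 * t ≤ 4 * N ^ 2 * ((1 + t) * T) := by nlinarith
      have h3 : N * Real.sqrt t * s * T ≤ (s ^ 2 * T / 16 + 4 * N ^ 2 * (1 + t)) * T := by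
        ring_nf; ring_nf at key h2; nlinarith
      exact le_of_mul_le_mul_right h3 hT
    have := mul_le_mul_of_nonneg_left hlog hN.le
    nlinarith
  · -- large time
    have hThalf : 1/2 ≤ T := half_le_tanh hge
    have hprod : 1 + Real.sqrt t * (1 + s) ≤ (1 + Real.sqrt t) * (1 + s) := by nlinarith
    have hlog : Real.log (1 + Real.sqrt t * (1 + s)) ≤ Real.sqrt t + s := by
      calc Real.log (1 + Real.sqrt t * (1 + s)) ≤ Real.log ((1 + Real.sqrt t) * (1 + s)) :=
            Real.log_le_log (by positivity) hprod
        _ = Real.log (1 + Real.sqrt t) + Real.log (1 + s) :=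
            Real.log_mul (by positivity) (by positivity)
        _ ≤ Real.sqrt t + s := by
            have g1 := Real.log_le_sub_one_of_pos (x := 1 + Real.sqrt t) (by positivity)
            have g2 := Real.log_le_sub_one_of_pos (x := 1 + s) (by positivity)
            linarith
    have h1 : N * Real.sqrt t ≤ t / 4 + N ^ 2 := by
      nlinarith [sq_nonneg (Real.sqrt t - 2 * N)]
    have h2 : N * s ≤ s ^ 2 * T / 16 + 8 * N ^ 2 := by
      have key : N * s * T ≤ s ^ 2 * T ^ 2 / 16 + 4 * N ^ 2 := by
        nlinarith [sq_nonneg (s * T / 4 - 2 * N)]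
      have h3 : N * s * T ≤ (s ^ 2 * T / 16 + 8 * N ^ 2) * T := by nlinarith
      exact le_of_mul_le_mul_right h3 hT
    have := mul_le_mul_of_nonneg_left hlog hN.le
    nlinarith


lemma prefactor_bound (d : ℕ) (hd : 3 ≤ d) {t : ℝ} (ht : 0 < t) :
    (1 + t) * (2 * π * Real.sinh (2 * t)) ^ (-(d : ℝ) / 2) * Real.exp (5 * t / 8)
      ≤ (2 * Real.exp 1 + (4 * (d : ℝ)) ^ ((d : ℝ) / 2)) * t ^ (-(d : ℝ) / 2) := by
  set e' : ℝ := (d : ℝ) / 2 with he'def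
  have hd3 : (3 : ℝ) ≤ (d : ℝ) := by exact_mod_cast hd
  have he' : (3 : ℝ) / 2 ≤ e' := by rw [he'def]; linarith
  have he'pos : 0 < e' := by linarith
  have hexp : -(d : ℝ) / 2 = -e' := by rw [he'def]; ring
  have hsinh : 0 < Real.sinh (2 * t) := Real.sinh_pos_iff.2 (by linarith)
  have hπ : (1 : ℝ) ≤ 2 * π := by nlinarith [Real.pi_gt_three]
  have hbase : 0 < 2 * π * Real.sinh (2 * t) := by nlinarith
  have h4d : (0:ℝ) < (4 * (d : ℝ)) ^ e' := Real.rpow_pos_of_pos (by linarith) _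
  rw [hexp]
  rcases le_total t 1 with hle | hge
  · -- small t
    have hb : t ≤ 2 * π * Real.sinh (2 * t) := by
      have h1 : 2 * t ≤ Real.sinh (2 * t) := Real.self_le_sinh_iff.2 (by linarith)
      nlinarith
    have hP : (2 * π * Real.sinh (2 * t)) ^ (-e') ≤ t ^ (-e') := by
      rw [Real.rpow_neg hbase.le, Real.rpow_neg ht.le]
      exact inv_anti₀ (Real.rpow_pos_of_pos ht _)
        (Real.rpow_le_rpow ht.le hb he'pos.le)
    have htpos : (0:ℝ) < t ^ (-e') := Real.rpow_pos_of_pos ht _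
    have hPpos : (0:ℝ) < (2 * π * Real.sinh (2 * t)) ^ (-e') := Real.rpow_pos_of_pos hbase _
    have hexp58 : Real.exp (5 * t / 8) ≤ Real.exp 1 := by
      apply Real.exp_le_exp.2; linarith
    calc (1 + t) * (2 * π * Real.sinh (2 * t)) ^ (-e') * Real.exp (5 * t / 8)
        ≤ 2 * (t ^ (-e')) * Real.exp 1 := by
          apply mul_le_mul _ hexp58 (Real.exp_pos _).le (by positivity)
          apply mul_le_mul (by linarith) hP hPpos.le (by norm_num)
      _ = (2 * Real.exp 1) * t ^ (-e') := by ring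
      _ ≤ (2 * Real.exp 1 + (4 * (d : ℝ)) ^ e') * t ^ (-e') := by nlinarith
  · -- large t
    have he2t : (2:ℝ) ≤ Real.exp (2 * t) := by
      have := Real.add_one_le_exp (2 * t); linarith
    have hsinh2 : Real.exp (2 * t) / 4 ≤ Real.sinh (2 * t) := by
      rw [Real.sinh_eq]
      have h1 : Real.exp (-(2 * t)) ≤ 1 := Real.exp_le_one_iff.2 (by linarith)
      linarith
    have hb : Real.exp (2 * t) / 4 ≤ 2 * π * Real.sinh (2 * t) := by nlinarith
    have hP : (2 * π * Real.sinh (2 * t)) ^ (-e') ≤ (Real.exp (2 * t) / 4) ^ (-e') := by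
      rw [Real.rpow_neg hbase.le, Real.rpow_neg (by positivity)]
      exact inv_anti₀ (Real.rpow_pos_of_pos (by positivity) _)
        (Real.rpow_le_rpow (by positivity) hb he'pos.le)
    have hPval : (Real.exp (2 * t) / 4) ^ (-e') = Real.exp (-(2 * t * e')) * 4 ^ e' := by
      rw [Real.div_rpow (Real.exp_pos _).le (by norm_num), ← Real.exp_mul,
        Real.rpow_neg (by norm_num : (0:ℝ) ≤ 4)]
      rw [div_eq_mul_inv, inv_inv, mul_comm (2*t) (-e')]
      ring_nf
    have hte' : t ^ e' ≤ (d : ℝ) ^ e' * Real.exp (t / 2) := by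
      have hlogt : Real.log t ≤ t / (d : ℝ) - 1 + Real.log (d : ℝ) := by
        have hdpos : (0:ℝ) < (d:ℝ) := by linarith
        have h1 : Real.log (t / (d:ℝ)) ≤ t / (d:ℝ) - 1 :=
          Real.log_le_sub_one_of_pos (by positivity)
        have h2 : Real.log (t / (d:ℝ)) = Real.log t - Real.log (d:ℝ) :=
          Real.log_div (by linarith) (by linarith)
        linarith
      have h3 : Real.log t * e' ≤ t / 2 + Real.log (d:ℝ) * e' := by
        have h4 : Real.log t * e' ≤ (t / (d:ℝ) - 1 + Real.log (d:ℝ)) * e' := by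
          apply mul_le_mul_of_nonneg_right hlogt he'pos.le
        have h5 : (t / (d:ℝ)) * e' = t / 2 := by
          rw [he'def]; field_simp
        nlinarith
      rw [Real.rpow_def_of_pos ht, Real.rpow_def_of_pos (by linarith : (0:ℝ) < (d:ℝ))]
      calc Real.exp (Real.log t * e') ≤ Real.exp (t / 2 + Real.log (d:ℝ) * e') :=
            Real.exp_le_exp.2 h3
        _ = Real.exp (Real.log (d:ℝ) * e') * Real.exp (t / 2) := by
            rw [← Real.exp_add]; ring_nf
    -- main estimate : LHS * t^{e'} ≤ (4d)^{e'}
    have htpow : (0:ℝ) < t ^ e' := Real.rpow_pos_of_pos ht _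
    have key : (1 + t) * (2 * π * Real.sinh (2 * t)) ^ (-e') * Real.exp (5 * t / 8) * t ^ e'
        ≤ (4 * (d : ℝ)) ^ e' := by
      have h1t : (1 + t) ≤ Real.exp t := by linarith [Real.add_one_le_exp t]
      calc (1 + t) * (2 * π * Real.sinh (2 * t)) ^ (-e') * Real.exp (5 * t / 8) * t ^ e'
          ≤ Real.exp t * (Real.exp (-(2 * t * e')) * 4 ^ e') * Real.exp (5 * t / 8) *
              ((d : ℝ) ^ e' * Real.exp (t / 2)) := by
            apply mul_le_mul _ hte' htpow.le (by positivity)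
            apply mul_le_mul _ le_rfl (Real.exp_pos _).le (by positivity)
            apply mul_le_mul h1t (hPval ▸ hP) (Real.rpow_pos_of_pos hbase _).le
              (Real.exp_pos _).le
        _ = (4 ^ e' * (d:ℝ) ^ e') * Real.exp (t + (-(2 * t * e')) + 5 * t / 8 + t / 2) := by
            rw [Real.exp_add, Real.exp_add, Real.exp_add]; ring
        _ ≤ (4 * (d : ℝ)) ^ e' * 1 := by
            rw [← Real.mul_rpow (by norm_num) (by linarith)]
            apply mul_le_mul_of_nonneg_left _ (by positivity)
            rw [Real.exp_le_one_iff]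
            nlinarith
        _ = (4 * (d : ℝ)) ^ e' := by ring
    have : (1 + t) * (2 * π * Real.sinh (2 * t)) ^ (-e') * Real.exp (5 * t / 8)
        ≤ (4 * (d : ℝ)) ^ e' * t ^ (-e') := by
      rw [Real.rpow_neg ht.le, ← div_eq_mul_inv, le_div_iff₀ htpow]
      exact key
    have h2e : (0:ℝ) < 2 * Real.exp 1 := by positivity
    have htneg : (0:ℝ) < t ^ (-e') := Real.rpow_pos_of_pos ht _
    nlinarith


lemma linear_factor_bound {t A1 B1 T K : ℝ} (ht : 0 < t) (hA : 0 ≤ A1) (hB : 0 ≤ B1)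
    (hT : 0 < T) (hT1 : T ≤ 1) (hK1 : 1 ≤ K) (hKt : t * K ≤ 1 + t) :
    Real.sqrt t * ((A1 + Real.sqrt t) * T + (B1 + Real.sqrt t) * K) ≤
      4 * Real.exp 4 * (1 + t) * Real.exp (A1 ^ 2 * T / 8 + B1 ^ 2 * K / 16) := by
  have hst : 0 ≤ Real.sqrt t := Real.sqrt_nonneg t
  have hst2 : Real.sqrt t * Real.sqrt t = t := Real.mul_self_sqrt ht.le
  have hK0 : 0 < K := by linarith
  have hsT : 0 ≤ Real.sqrt T := Real.sqrt_nonneg T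
  have hsK : 0 ≤ Real.sqrt K := Real.sqrt_nonneg K
  have hsT2 : Real.sqrt T * Real.sqrt T = T := Real.mul_self_sqrt hT.le
  have hsK2 : Real.sqrt K * Real.sqrt K = K := Real.mul_self_sqrt hK0.le
  have harg : (0:ℝ) ≤ A1 ^ 2 * T / 8 + B1 ^ 2 * K / 16 := by positivity
  set E := Real.exp (A1 ^ 2 * T / 8 + B1 ^ 2 * K / 16) with hEdef
  have hE1 : (1:ℝ) ≤ E := by
    rw [hEdef, ← Real.exp_zero]
    exact Real.exp_le_exp.2 harg
  have hEpos : 0 < E := by linarith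
  have hst1t : Real.sqrt t ≤ 1 + t := by nlinarith [sq_nonneg (Real.sqrt t - 1)]
  have h1t : (0:ℝ) < 1 + t := by linarith
  have hEA : Real.exp (A1 ^ 2 * T / 8) ≤ E := by
    rw [hEdef]; apply Real.exp_le_exp.2; nlinarith
  have hEB : Real.exp (B1 ^ 2 * K / 16) ≤ E := by
    rw [hEdef]; apply Real.exp_le_exp.2; nlinarith
  -- term (a)
  have ha : Real.sqrt t * A1 * T ≤ Real.exp 2 * (1 + t) * E := by
    have hub : A1 * Real.sqrt T ≤ Real.exp 2 * Real.exp (A1 ^ 2 * T / 8) := by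
      calc A1 * Real.sqrt T ≤ (A1 * Real.sqrt T) ^ 2 / 8 + 2 := by
            nlinarith [sq_nonneg (A1 * Real.sqrt T - 4), mul_nonneg hA hsT]
        _ ≤ Real.exp ((A1 * Real.sqrt T) ^ 2 / 8 + 2) := by
            linarith [Real.add_one_le_exp ((A1 * Real.sqrt T) ^ 2 / 8 + 2)]
        _ = Real.exp 2 * Real.exp (A1 ^ 2 * T / 8) := by
            rw [← Real.exp_add, mul_pow, Real.sq_sqrt hT.le]
            ring_nf
    have hfac : Real.sqrt t * A1 * T = (Real.sqrt t * Real.sqrt T) * (A1 * Real.sqrt T) := by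
      linear_combination (-(Real.sqrt t * A1)) * (Real.sq_sqrt hT.le)
    have hstT : Real.sqrt t * Real.sqrt T ≤ 1 + t := by
      have h5 : Real.sqrt T ≤ 1 := by nlinarith
      nlinarith
    rw [hfac]
    calc (Real.sqrt t * Real.sqrt T) * (A1 * Real.sqrt T)
        ≤ (1 + t) * (Real.exp 2 * Real.exp (A1 ^ 2 * T / 8)) :=
          mul_le_mul hstT hub (by positivity) h1t.le
      _ = Real.exp 2 * (1 + t) * Real.exp (A1 ^ 2 * T / 8) := by ring
      _ ≤ Real.exp 2 * (1 + t) * E := by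
          apply mul_le_mul_of_nonneg_left hEA (by positivity)
  -- term (b)
  have hb2 : Real.sqrt t * Real.sqrt t * T ≤ 1 * (1 + t) * E := by
    rw [hst2]; nlinarith
  -- term (c)
  have hc : Real.sqrt t * B1 * K ≤ Real.exp 4 * (1 + t) * E := by
    have hvb : B1 * Real.sqrt K ≤ Real.exp 4 * Real.exp (B1 ^ 2 * K / 16) := by
      calc B1 * Real.sqrt K ≤ (B1 * Real.sqrt K) ^ 2 / 16 + 4 := by
            nlinarith [sq_nonneg (B1 * Real.sqrt K - 8), mul_nonneg hB hsK]
        _ ≤ Real.exp ((B1 * Real.sqrt K) ^ 2 / 16 + 4) := by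
            linarith [Real.add_one_le_exp ((B1 * Real.sqrt K) ^ 2 / 16 + 4)]
        _ = Real.exp 4 * Real.exp (B1 ^ 2 * K / 16) := by
            rw [← Real.exp_add, mul_pow, Real.sq_sqrt hK0.le]
            ring_nf
    have hfac : Real.sqrt t * B1 * K = (Real.sqrt t * Real.sqrt K) * (B1 * Real.sqrt K) := by
      linear_combination (-(Real.sqrt t * B1)) * (Real.sq_sqrt hK0.le)
    have hstK : Real.sqrt t * Real.sqrt K ≤ 1 + t := by
      have hw2 : (Real.sqrt t * Real.sqrt K) * (Real.sqrt t * Real.sqrt K) = t * K := by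
        linear_combination Real.sqrt K * Real.sqrt K * hst2 + t * hsK2
      nlinarith [mul_nonneg hst hsK]
    rw [hfac]
    calc (Real.sqrt t * Real.sqrt K) * (B1 * Real.sqrt K)
        ≤ (1 + t) * (Real.exp 4 * Real.exp (B1 ^ 2 * K / 16)) :=
          mul_le_mul hstK hvb (by positivity) h1t.le
      _ = Real.exp 4 * (1 + t) * Real.exp (B1 ^ 2 * K / 16) := by ring
      _ ≤ Real.exp 4 * (1 + t) * E := by
          apply mul_le_mul_of_nonneg_left hEB (by positivity)
  -- term (d)
  have hd2 : Real.sqrt t * Real.sqrt t * K ≤ 1 * (1 + t) * E := by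
    rw [hst2]; nlinarith
  have hexpand : Real.sqrt t * ((A1 + Real.sqrt t) * T + (B1 + Real.sqrt t) * K) =
      Real.sqrt t * A1 * T + Real.sqrt t * Real.sqrt t * T +
        Real.sqrt t * B1 * K + Real.sqrt t * Real.sqrt t * K := by ring
  rw [hexpand]
  have he24 : Real.exp 2 ≤ Real.exp 4 := Real.exp_le_exp.2 (by norm_num)
  have he14 : (1:ℝ) ≤ Real.exp 4 := by
    rw [← Real.exp_zero]; exact Real.exp_le_exp.2 (by norm_num)
  have hfinal : (Real.exp 2 + 1 + Real.exp 4 + 1) * ((1 + t) * E) ≤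
      4 * Real.exp 4 * ((1 + t) * E) := by
    apply mul_le_mul_of_nonneg_right (by nlinarith) (by positivity)
  nlinarith [hfinal, ha, hb2, hc, hd2]


lemma scalar_main (d : ℕ) (hd : 3 ≤ d) {N : ℝ} (hN : 0 < N)
    {t A1 B1 s1 s2 D T K : ℝ}
    (ht : 0 < t) (hA : 0 ≤ A1) (hB : 0 ≤ B1)
    (hT : 0 < T) (hT1 : T ≤ 1) (hK1 : 1 ≤ K) (hKt : t * K ≤ 1 + t) (hKt1 : 1 ≤ K * t)
    (hTK : T ≤ K)
    (hL1 : N * Real.log (1 + Real.sqrt t * (1 + s1)) ≤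
      s1 ^ 2 * T / 16 + (9 * N ^ 2 + N + 1) + t / 4)
    (hL2 : N * Real.log (1 + Real.sqrt t * (1 + s2)) ≤
      s2 ^ 2 * T / 16 + (9 * N ^ 2 + N + 1) + t / 4)
    (h1 : s1 ^ 2 ≤ A1 ^ 2 + B1 ^ 2 + 2 * t) (h2 : 2 * s2 ^ 2 ≤ A1 ^ 2 + B1 ^ 2)
    (h3 : D ^ 2 ≤ 2 * B1 ^ 2 + 2 * t) :
    (2 * π * Real.sinh (2 * t)) ^ (-(d : ℝ) / 2) *
      (Real.sqrt t * ((A1 + Real.sqrt t) * T + (B1 + Real.sqrt t) * K)) *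
      Real.exp (-(A1 ^ 2 * T + B1 ^ 2 * K) / 4) ≤
    (4 * Real.exp 4 * Real.exp (1 / 16) * Real.exp (2 * (9 * N ^ 2 + N + 1)) *
        (2 * Real.exp 1 + (4 * (d : ℝ)) ^ ((d : ℝ) / 2))) *
      t ^ (-(d : ℝ) / 2) * Real.exp (-(D ^ 2 / (32 * t))) *
      Real.exp (-(N * Real.log (1 + Real.sqrt t * (1 + s1)))) *
      Real.exp (-(N * Real.log (1 + Real.sqrt t * (1 + s2)))) := by
  have hsinh2 : 0 < Real.sinh (2 * t) := Real.sinh_pos_iff.2 (by linarith)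
  have hπ : (1 : ℝ) ≤ 2 * π := by nlinarith [Real.pi_gt_three]
  have hbase : (0:ℝ) < 2 * π * Real.sinh (2 * t) := by nlinarith
  have hP : (0:ℝ) < (2 * π * Real.sinh (2 * t)) ^ (-(d : ℝ) / 2) :=
    Real.rpow_pos_of_pos hbase _
  have LF := linear_factor_bound ht hA hB hT hT1 hK1 hKt
  have hD32 : D ^ 2 / (32 * t) ≤ B1 ^ 2 * K / 16 + 1 / 16 := by
    rw [div_le_iff₀ (by positivity)]
    nlinarith [mul_le_mul_of_nonneg_left hKt1 (sq_nonneg B1)]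
  have hexpo : A1 ^ 2 * T / 8 + B1 ^ 2 * K / 16 + -(A1 ^ 2 * T + B1 ^ 2 * K) / 4 ≤
      5 * t / 8 + ((1 / 16 + 2 * (9 * N ^ 2 + N + 1)) + -(D ^ 2 / (32 * t)) +
      -(N * Real.log (1 + Real.sqrt t * (1 + s1))) +
      -(N * Real.log (1 + Real.sqrt t * (1 + s2)))) := by
    have e1 : s1 ^ 2 * T ≤ (A1 ^ 2 + B1 ^ 2) * T + 2 * t := by
      nlinarith [mul_le_mul_of_nonneg_right h1 hT.le]
    have e2 : 2 * (s2 ^ 2 * T) ≤ (A1 ^ 2 + B1 ^ 2) * T := by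
      nlinarith [mul_le_mul_of_nonneg_right h2 hT.le]
    have e3 : B1 ^ 2 * T ≤ B1 ^ 2 * K := mul_le_mul_of_nonneg_left hTK (sq_nonneg B1)
    have e4 : 0 ≤ A1 ^ 2 * T := by positivity
    have e5 : 0 ≤ B1 ^ 2 * T := by positivity
    linarith [hL1, hL2, hD32, e1, e2, e3, e4, e5]
  have hexpo' : Real.exp (A1 ^ 2 * T / 8 + B1 ^ 2 * K / 16) *
      Real.exp (-(A1 ^ 2 * T + B1 ^ 2 * K) / 4) ≤
      Real.exp (5 * t / 8) * (Real.exp (1 / 16) * Real.exp (2 * (9 * N ^ 2 + N + 1)) *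
        Real.exp (-(D ^ 2 / (32 * t))) *
        Real.exp (-(N * Real.log (1 + Real.sqrt t * (1 + s1)))) *
        Real.exp (-(N * Real.log (1 + Real.sqrt t * (1 + s2))))) := by
    rw [← Real.exp_add, ← Real.exp_add, ← Real.exp_add, ← Real.exp_add, ← Real.exp_add,
      ← Real.exp_add]
    apply Real.exp_le_exp.2
    linarith [hexpo]
  have hmid : 0 ≤ Real.sqrt t * ((A1 + Real.sqrt t) * T + (B1 + Real.sqrt t) * K) := by
    have h5 : 0 ≤ (A1 + Real.sqrt t) * T := by positivity
    have h6 : 0 ≤ (B1 + Real.sqrt t) * K := by positivity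
    positivity
  have main1 : (2 * π * Real.sinh (2 * t)) ^ (-(d : ℝ) / 2) *
      (Real.sqrt t * ((A1 + Real.sqrt t) * T + (B1 + Real.sqrt t) * K)) *
      Real.exp (-(A1 ^ 2 * T + B1 ^ 2 * K) / 4) ≤
      (4 * Real.exp 4) *
        ((1 + t) * (2 * π * Real.sinh (2 * t)) ^ (-(d : ℝ) / 2) * Real.exp (5 * t / 8)) *
        (Real.exp (1 / 16) * Real.exp (2 * (9 * N ^ 2 + N + 1)) *
          Real.exp (-(D ^ 2 / (32 * t))) *
          Real.exp (-(N * Real.log (1 + Real.sqrt t * (1 + s1)))) *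
          Real.exp (-(N * Real.log (1 + Real.sqrt t * (1 + s2))))) := by
    calc (2 * π * Real.sinh (2 * t)) ^ (-(d : ℝ) / 2) *
        (Real.sqrt t * ((A1 + Real.sqrt t) * T + (B1 + Real.sqrt t) * K)) *
        Real.exp (-(A1 ^ 2 * T + B1 ^ 2 * K) / 4)
        ≤ (2 * π * Real.sinh (2 * t)) ^ (-(d : ℝ) / 2) *
          (4 * Real.exp 4 * (1 + t) * Real.exp (A1 ^ 2 * T / 8 + B1 ^ 2 * K / 16)) *
          Real.exp (-(A1 ^ 2 * T + B1 ^ 2 * K) / 4) := by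
          apply mul_le_mul_of_nonneg_right _ (Real.exp_pos _).le
          exact mul_le_mul_of_nonneg_left LF hP.le
      _ = (4 * Real.exp 4 * ((1 + t) * (2 * π * Real.sinh (2 * t)) ^ (-(d : ℝ) / 2))) *
          (Real.exp (A1 ^ 2 * T / 8 + B1 ^ 2 * K / 16) *
            Real.exp (-(A1 ^ 2 * T + B1 ^ 2 * K) / 4)) := by
          ring
      _ ≤ (4 * Real.exp 4 * ((1 + t) * (2 * π * Real.sinh (2 * t)) ^ (-(d : ℝ) / 2))) *
          (Real.exp (5 * t / 8) * (Real.exp (1 / 16) * Real.exp (2 * (9 * N ^ 2 + N + 1)) *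
            Real.exp (-(D ^ 2 / (32 * t))) *
            Real.exp (-(N * Real.log (1 + Real.sqrt t * (1 + s1)))) *
            Real.exp (-(N * Real.log (1 + Real.sqrt t * (1 + s2)))))) := by
          apply mul_le_mul_of_nonneg_left hexpo'
          positivity
      _ = (4 * Real.exp 4) *
          ((1 + t) * (2 * π * Real.sinh (2 * t)) ^ (-(d : ℝ) / 2) * Real.exp (5 * t / 8)) *
          (Real.exp (1 / 16) * Real.exp (2 * (9 * N ^ 2 + N + 1)) *
            Real.exp (-(D ^ 2 / (32 * t))) *
            Real.exp (-(N * Real.log (1 + Real.sqrt t * (1 + s1)))) *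
            Real.exp (-(N * Real.log (1 + Real.sqrt t * (1 + s2))))) := by
          ring
  have main2 := prefactor_bound d hd ht
  have hRest : (0:ℝ) ≤ Real.exp (1 / 16) * Real.exp (2 * (9 * N ^ 2 + N + 1)) *
      Real.exp (-(D ^ 2 / (32 * t))) *
      Real.exp (-(N * Real.log (1 + Real.sqrt t * (1 + s1)))) *
      Real.exp (-(N * Real.log (1 + Real.sqrt t * (1 + s2)))) := by positivity
  calc (2 * π * Real.sinh (2 * t)) ^ (-(d : ℝ) / 2) *
      (Real.sqrt t * ((A1 + Real.sqrt t) * T + (B1 + Real.sqrt t) * K)) *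
      Real.exp (-(A1 ^ 2 * T + B1 ^ 2 * K) / 4)
      ≤ (4 * Real.exp 4) *
        ((1 + t) * (2 * π * Real.sinh (2 * t)) ^ (-(d : ℝ) / 2) * Real.exp (5 * t / 8)) *
        (Real.exp (1 / 16) * Real.exp (2 * (9 * N ^ 2 + N + 1)) *
          Real.exp (-(D ^ 2 / (32 * t))) *
          Real.exp (-(N * Real.log (1 + Real.sqrt t * (1 + s1)))) *
          Real.exp (-(N * Real.log (1 + Real.sqrt t * (1 + s2))))) := main1
    _ ≤ (4 * Real.exp 4) *
        ((2 * Real.exp 1 + (4 * (d : ℝ)) ^ ((d : ℝ) / 2)) * t ^ (-(d : ℝ) / 2)) *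
        (Real.exp (1 / 16) * Real.exp (2 * (9 * N ^ 2 + N + 1)) *
          Real.exp (-(D ^ 2 / (32 * t))) *
          Real.exp (-(N * Real.log (1 + Real.sqrt t * (1 + s1)))) *
          Real.exp (-(N * Real.log (1 + Real.sqrt t * (1 + s2))))) := by
        apply mul_le_mul_of_nonneg_right _ hRest
        apply mul_le_mul_of_nonneg_left main2 (by positivity)
    _ = (4 * Real.exp 4 * Real.exp (1 / 16) * Real.exp (2 * (9 * N ^ 2 + N + 1)) *
          (2 * Real.exp 1 + (4 * (d : ℝ)) ^ ((d : ℝ) / 2))) *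
        t ^ (-(d : ℝ) / 2) * Real.exp (-(D ^ 2 / (32 * t))) *
        Real.exp (-(N * Real.log (1 + Real.sqrt t * (1 + s1)))) *
        Real.exp (-(N * Real.log (1 + Real.sqrt t * (1 + s2)))) := by ring


lemma exp_sub_exp_le {a b : ℝ} (h : b ≤ a) :
    Real.exp a - Real.exp b ≤ (a - b) * (Real.exp a + Real.exp b) := by
  have h1 : (b - a) + 1 ≤ Real.exp (b - a) := Real.add_one_le_exp _
  have h2 : Real.exp (b - a) * Real.exp a = Real.exp b := by
    rw [← Real.exp_add]; ring_nf
  nlinarith [Real.exp_pos a, Real.exp_pos b, sub_nonneg.2 h]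

lemma abs_exp_sub_exp (a b : ℝ) :
    |Real.exp a - Real.exp b| ≤ |a - b| * (Real.exp a + Real.exp b) := by
  rcases le_total b a with h | h
  · rw [abs_of_nonneg (sub_nonneg.2 (Real.exp_le_exp.2 h)), abs_of_nonneg (sub_nonneg.2 h)]
    exact exp_sub_exp_le h
  · rw [abs_of_nonpos (sub_nonpos.2 (Real.exp_le_exp.2 h)), abs_of_nonpos (sub_nonpos.2 h)]
    have := exp_sub_exp_le h
    nlinarith [this]

lemma sq_norm_shift_bound {d : ℕ} (u h : Euc d) :
    |‖u + h‖ ^ 2 - ‖u‖ ^ 2| ≤ ‖h‖ * (‖u + h‖ + ‖u‖) := by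
  have base : |‖u + h‖ - ‖u‖| ≤ ‖h‖ := by
    have := abs_norm_sub_norm_le (u + h) u
    simpa [add_sub_cancel_left] using this
  have hfac : ‖u + h‖ ^ 2 - ‖u‖ ^ 2 = (‖u + h‖ - ‖u‖) * (‖u + h‖ + ‖u‖) := by ring
  rw [hfac, abs_mul, abs_of_nonneg (by positivity : (0:ℝ) ≤ ‖u + h‖ + ‖u‖)]
  exact mul_le_mul_of_nonneg_right base (by positivity)



lemma core (d : ℕ) (hd : 3 ≤ d) {N : ℝ} (hN : 0 < N) {t : ℝ} (ht : 0 < t)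
    (x y z : Euc d) (hz : ‖z - x‖ ≤ Real.sqrt t) :
    (2 * π * Real.sinh (2 * t)) ^ (-(d : ℝ) / 2) *
      (Real.sqrt t * ((‖z + y‖ + Real.sqrt t) * Real.tanh t +
        (‖z - y‖ + Real.sqrt t) * (Real.cosh t / Real.sinh t))) *
      Real.exp (-(‖z + y‖ ^ 2 * Real.tanh t + ‖z - y‖ ^ 2 * (Real.cosh t / Real.sinh t)) / 4)
    ≤ (4 * Real.exp 4 * Real.exp (1 / 16) * Real.exp (2 * (9 * N ^ 2 + N + 1)) *
        (2 * Real.exp 1 + (4 * (d : ℝ)) ^ ((d : ℝ) / 2))) *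
      t ^ (-(d : ℝ) / 2) * Real.exp (-(‖x - y‖ ^ 2 / (32 * t))) *
      (1 + Real.sqrt t / rho x) ^ (-N) * (1 + Real.sqrt t / rho y) ^ (-N) := by
  have hsinh : 0 < Real.sinh t := Real.sinh_pos_iff.2 ht
  have hT : 0 < Real.tanh t := tanh_pos' ht
  have hT1 : Real.tanh t ≤ 1 := tanh_le_one' ht.le
  have hK1 : 1 ≤ Real.cosh t / Real.sinh t := by
    rw [le_div_iff₀ hsinh, one_mul]
    nlinarith [Real.cosh_sub_sinh t, Real.exp_pos (-t)]
  have hKt : t * (Real.cosh t / Real.sinh t) ≤ 1 + t := by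
    rw [← mul_div_assoc, div_le_iff₀ hsinh]
    nlinarith [mul_cosh_le_sinh ht.le]
  have hKt1 : 1 ≤ Real.cosh t / Real.sinh t * t := by
    rw [div_mul_eq_mul_div, le_div_iff₀ hsinh, one_mul]
    nlinarith [sinh_le_mul_cosh t ht.le]
  have hTK : Real.tanh t ≤ Real.cosh t / Real.sinh t := le_trans hT1 hK1
  have hst : 0 ≤ Real.sqrt t := Real.sqrt_nonneg t
  have hst2 : Real.sqrt t ^ 2 = t := Real.sq_sqrt ht.le
  -- parallelogram law
  have par : ‖z + y‖ ^ 2 + ‖z - y‖ ^ 2 = 2 * (‖z‖ ^ 2 + ‖y‖ ^ 2) := by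
    have h1 := norm_add_sq_real z y
    have h2 := norm_sub_sq_real z y
    linarith
  have h1 : ‖x‖ ^ 2 ≤ ‖z + y‖ ^ 2 + ‖z - y‖ ^ 2 + 2 * t := by
    have tri : ‖x‖ ≤ ‖z‖ + ‖z - x‖ := by
      have hxe : x = z - (z - x) := by abel
      calc ‖x‖ = ‖z - (z - x)‖ := by rw [← hxe]
        _ ≤ ‖z‖ + ‖z - x‖ := norm_sub_le _ _
    nlinarith [norm_nonneg z, norm_nonneg (z - x), norm_nonneg x, norm_nonneg y,
      sq_nonneg (‖z‖ - Real.sqrt t), sq_nonneg ‖y‖]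
  have h2 : 2 * ‖y‖ ^ 2 ≤ ‖z + y‖ ^ 2 + ‖z - y‖ ^ 2 := by nlinarith [sq_nonneg ‖z‖]
  have h3 : ‖x - y‖ ^ 2 ≤ 2 * ‖z - y‖ ^ 2 + 2 * t := by
    have tri : ‖x - y‖ ≤ ‖z - x‖ + ‖z - y‖ := by
      have hxe : x - y = (z - y) - (z - x) := by abel
      calc ‖x - y‖ = ‖(z - y) - (z - x)‖ := by rw [← hxe]
        _ ≤ ‖z - y‖ + ‖z - x‖ := norm_sub_le _ _
        _ = ‖z - x‖ + ‖z - y‖ := by ring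
    nlinarith [norm_nonneg (z - x), norm_nonneg (z - y), norm_nonneg (x - y),
      sq_nonneg (‖z - y‖ - Real.sqrt t)]
  have hL1 := log_factor_bound hN ht (norm_nonneg x)
  have hL2 := log_factor_bound hN ht (norm_nonneg y)
  have hrx : (1 + Real.sqrt t / rho x) ^ (-N) =
      Real.exp (-(N * Real.log (1 + Real.sqrt t * (1 + ‖x‖)))) := by
    have hm : Real.sqrt t / rho x = Real.sqrt t * (1 + ‖x‖) := by
      rw [rho, one_div, div_inv_eq_mul]
    have hpos : (0:ℝ) < 1 + Real.sqrt t * (1 + ‖x‖) := by positivity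
    rw [hm, Real.rpow_def_of_pos hpos]
    congr 1
    ring
  have hry : (1 + Real.sqrt t / rho y) ^ (-N) =
      Real.exp (-(N * Real.log (1 + Real.sqrt t * (1 + ‖y‖)))) := by
    have hm : Real.sqrt t / rho y = Real.sqrt t * (1 + ‖y‖) := by
      rw [rho, one_div, div_inv_eq_mul]
    have hpos : (0:ℝ) < 1 + Real.sqrt t * (1 + ‖y‖) := by positivity
    rw [hm, Real.rpow_def_of_pos hpos]
    congr 1
    ring
  rw [hrx, hry]
  exact scalar_main d hd hN ht (norm_nonneg (z + y)) (norm_nonneg (z - y)) hT hT1 hK1 hKt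
    hKt1 hTK hL1 hL2 h1 h2 h3


/-- Hölder continuity estimate for the Hermite heat kernel: there are
`δ ∈ (0,1)` and `C > 0` such that for every `N > 0` there is `C_N > 0` with
`|g_t(x+h,y) - g_t(x,y)| ≤ C_N (|h|/√t)^δ t^{-d/2} e^{-C|x-y|²/t}
(1+√t/ρ(x))^{-N} (1+√t/ρ(y))^{-N}` whenever `|h| < √t`. -/
theorem heat_kernel_holder_bound (d : ℕ) (hd : 3 ≤ d) :
    ∃ δ C : ℝ, δ ∈ Set.Ioo (0 : ℝ) 1 ∧ 0 < C ∧
      ∀ N : ℝ, 0 < N → ∃ CN : ℝ, 0 < CN ∧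
        ∀ t : ℝ, 0 < t → ∀ x y h : Euc d, ‖h‖ < Real.sqrt t →
          |heatKernel t (x + h) y - heatKernel t x y| ≤
            CN * (‖h‖ / Real.sqrt t) ^ δ * t ^ (-(d : ℝ) / 2) *
              Real.exp (-C * ‖x - y‖ ^ 2 / t) *
              (1 + Real.sqrt t / rho x) ^ (-N) * (1 + Real.sqrt t / rho y) ^ (-N) := by
  refine ⟨1/2, 1/32, ⟨by norm_num, by norm_num⟩, by norm_num, fun N hN => ?_⟩
  refine ⟨4 * Real.exp 4 * Real.exp (1 / 16) * Real.exp (2 * (9 * N ^ 2 + N + 1)) *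
    (2 * Real.exp 1 + (4 * (d : ℝ)) ^ ((d : ℝ) / 2)), by positivity, fun t ht x y h hh => ?_⟩
  set cst : ℝ := 4 * Real.exp 4 * Real.exp (1 / 16) * Real.exp (2 * (9 * N ^ 2 + N + 1)) *
    (2 * Real.exp 1 + (4 * (d : ℝ)) ^ ((d : ℝ) / 2)) with hcstdef
  have hcst : 0 < cst := by rw [hcstdef]; positivity
  have hst : 0 < Real.sqrt t := Real.sqrt_pos.2 ht
  have hsinh : 0 < Real.sinh t := Real.sinh_pos_iff.2 ht
  have hT0 : 0 ≤ Real.tanh t := by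
    rw [Real.tanh_eq_sinh_div_cosh]; positivity
  have hK0 : (0:ℝ) ≤ Real.cosh t / Real.sinh t := by positivity
  have hsinh2 : 0 < Real.sinh (2 * t) := Real.sinh_pos_iff.2 (by linarith)
  have hπ : (0:ℝ) < 2 * π := by positivity
  have hP : (0:ℝ) < (2 * π * Real.sinh (2 * t)) ^ (-(d : ℝ) / 2) :=
    Real.rpow_pos_of_pos (by positivity) _
  set P : ℝ := (2 * π * Real.sinh (2 * t)) ^ (-(d : ℝ) / 2) with hPdef
  set T : ℝ := Real.tanh t with hTdef
  set K : ℝ := Real.cosh t / Real.sinh t with hKdef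
  set Qx : ℝ := ‖x + y‖ ^ 2 * T + ‖x - y‖ ^ 2 * K with hQx
  set Qh : ℝ := ‖x + h + y‖ ^ 2 * T + ‖x + h - y‖ ^ 2 * K with hQh
  -- rewriting the kernels
  have hkx : heatKernel t x y = P * Real.exp (-(1/4) * Qx) := rfl
  have hkh : heatKernel t (x + h) y = P * Real.exp (-(1/4) * Qh) := rfl
  -- difference of quadratic forms
  have hd1 := sq_norm_shift_bound (x + y) h
  have hd2 := sq_norm_shift_bound (x - y) h
  have he1 : x + h + y = x + y + h := by abel
  have he2 : x + h - y = x - y + h := by abel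
  have hq : |Qh - Qx| ≤ ‖h‖ * ((‖x + h + y‖ + ‖x + y‖) * T + (‖x + h - y‖ + ‖x - y‖) * K) := by
    have hq1 : |‖x + h + y‖ ^ 2 - ‖x + y‖ ^ 2| ≤ ‖h‖ * (‖x + h + y‖ + ‖x + y‖) := by
      rw [he1]; exact hd1
    have hq2 : |‖x + h - y‖ ^ 2 - ‖x - y‖ ^ 2| ≤ ‖h‖ * (‖x + h - y‖ + ‖x - y‖) := by
      rw [he2]; exact hd2
    calc |Qh - Qx| = |(‖x + h + y‖ ^ 2 - ‖x + y‖ ^ 2) * T +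
          (‖x + h - y‖ ^ 2 - ‖x - y‖ ^ 2) * K| := by rw [hQh, hQx]; ring_nf
      _ ≤ |(‖x + h + y‖ ^ 2 - ‖x + y‖ ^ 2) * T| + |(‖x + h - y‖ ^ 2 - ‖x - y‖ ^ 2) * K| :=
          abs_add_le _ _
      _ = |‖x + h + y‖ ^ 2 - ‖x + y‖ ^ 2| * T + |‖x + h - y‖ ^ 2 - ‖x - y‖ ^ 2| * K := by
          rw [abs_mul, abs_mul, abs_of_nonneg hT0, abs_of_nonneg hK0]
      _ ≤ (‖h‖ * (‖x + h + y‖ + ‖x + y‖)) * T + (‖h‖ * (‖x + h - y‖ + ‖x - y‖)) * K := by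
          apply add_le_add (mul_le_mul_of_nonneg_right hq1 hT0)
            (mul_le_mul_of_nonneg_right hq2 hK0)
      _ = ‖h‖ * ((‖x + h + y‖ + ‖x + y‖) * T + (‖x + h - y‖ + ‖x - y‖) * K) := by ring
  -- exponential difference
  have habs : |Real.exp (-(1/4) * Qh) - Real.exp (-(1/4) * Qx)| ≤
      (|Qh - Qx| / 4) * (Real.exp (-(1/4) * Qh) + Real.exp (-(1/4) * Qx)) := by
    have h0 := abs_exp_sub_exp (-(1/4) * Qh) (-(1/4) * Qx)
    have h1 : |(-(1/4) * Qh) - (-(1/4) * Qx)| = |Qh - Qx| / 4 := by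
      rw [show (-(1/4) * Qh) - (-(1/4) * Qx) = (-(1/4)) * (Qh - Qx) by ring, abs_mul,
        abs_neg, abs_of_nonneg (by norm_num : (0:ℝ) ≤ 1/4)]
      ring
    rw [h1] at h0
    exact h0
  -- norms comparison
  have hhle : ‖h‖ ≤ Real.sqrt t := hh.le
  have n1 : ‖x + h + y‖ ≤ ‖x + y‖ + Real.sqrt t := by
    rw [he1]; exact le_trans (norm_add_le _ _) (by linarith)
  have n2 : ‖x + h - y‖ ≤ ‖x - y‖ + Real.sqrt t := by
    rw [he2]; exact le_trans (norm_add_le _ _) (by linarith)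
  have n3 : ‖x + y‖ ≤ ‖x + h + y‖ + Real.sqrt t := by
    have : x + y = (x + h + y) - h := by abel
    rw [this]
    exact le_trans (norm_sub_le _ _) (by linarith)
  have n4 : ‖x - y‖ ≤ ‖x + h - y‖ + Real.sqrt t := by
    have : x - y = (x + h - y) - h := by abel
    rw [this]
    exact le_trans (norm_sub_le _ _) (by linarith)
  set W : ℝ := (‖x + h + y‖ + ‖x + y‖) * T + (‖x + h - y‖ + ‖x - y‖) * K with hWdef
  set Wx : ℝ := (‖x + y‖ + Real.sqrt t) * T + (‖x - y‖ + Real.sqrt t) * K with hWxdef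
  set Wh : ℝ := (‖x + h + y‖ + Real.sqrt t) * T + (‖x + h - y‖ + Real.sqrt t) * K with hWhdef
  have hWWx : W ≤ 2 * Wx := by
    rw [hWdef, hWxdef]
    have q1 : (‖x + h + y‖ + ‖x + y‖) * T ≤ 2 * ((‖x + y‖ + Real.sqrt t) * T) := by
      apply le_trans (mul_le_mul_of_nonneg_right (show ‖x + h + y‖ + ‖x + y‖ ≤
        2 * (‖x + y‖ + Real.sqrt t) by linarith) hT0) (le_of_eq (by ring))
    have q2 : (‖x + h - y‖ + ‖x - y‖) * K ≤ 2 * ((‖x - y‖ + Real.sqrt t) * K) := by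
      apply le_trans (mul_le_mul_of_nonneg_right (show ‖x + h - y‖ + ‖x - y‖ ≤
        2 * (‖x - y‖ + Real.sqrt t) by linarith) hK0) (le_of_eq (by ring))
    linarith
  have hWWh : W ≤ 2 * Wh := by
    rw [hWdef, hWhdef]
    have q1 : (‖x + h + y‖ + ‖x + y‖) * T ≤ 2 * ((‖x + h + y‖ + Real.sqrt t) * T) := by
      apply le_trans (mul_le_mul_of_nonneg_right (show ‖x + h + y‖ + ‖x + y‖ ≤
        2 * (‖x + h + y‖ + Real.sqrt t) by linarith) hT0) (le_of_eq (by ring))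
    have q2 : (‖x + h - y‖ + ‖x - y‖) * K ≤ 2 * ((‖x + h - y‖ + Real.sqrt t) * K) := by
      apply le_trans (mul_le_mul_of_nonneg_right (show ‖x + h - y‖ + ‖x - y‖ ≤
        2 * (‖x + h - y‖ + Real.sqrt t) by linarith) hK0) (le_of_eq (by ring))
    linarith
  have hW0 : 0 ≤ W := by
    rw [hWdef]; positivity
  -- apply core twice
  have key1 := core d hd hN ht x y x (by simp [hst.le])
  have key2 := core d hd hN ht x y (x + h) (by simpa [add_sub_cancel_left] using hhle)
  set REST : ℝ := t ^ (-(d : ℝ) / 2) * Real.exp (-(‖x - y‖ ^ 2 / (32 * t))) *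
      (1 + Real.sqrt t / rho x) ^ (-N) * (1 + Real.sqrt t / rho y) ^ (-N) with hRESTdef
  have hREST : 0 ≤ REST := by
    rw [hRESTdef]
    have r1 : (0:ℝ) < t ^ (-(d : ℝ) / 2) := Real.rpow_pos_of_pos ht _
    have r2 : (0:ℝ) < (1 + Real.sqrt t / rho x) ^ (-N) := by
      apply Real.rpow_pos_of_pos
      have : 0 < rho x := by rw [rho]; positivity
      positivity
    have r3 : (0:ℝ) < (1 + Real.sqrt t / rho y) ^ (-N) := by
      apply Real.rpow_pos_of_pos
      have : 0 < rho y := by rw [rho]; positivity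
      positivity
    positivity
  have ekey1 : P * (Real.sqrt t * Wx) * Real.exp (-(1/4) * Qx) ≤ cst * REST := by
    have earg : Real.exp (-(1/4) * Qx) = Real.exp (-(Qx) / 4) := by
      congr 1; ring
    rw [earg, hQx]
    calc P * (Real.sqrt t * Wx) * Real.exp (-(‖x + y‖ ^ 2 * T + ‖x - y‖ ^ 2 * K) / 4)
        ≤ cst * (t ^ (-(d : ℝ) / 2) * Real.exp (-(‖x - y‖ ^ 2 / (32 * t))) *
          (1 + Real.sqrt t / rho x) ^ (-N) * (1 + Real.sqrt t / rho y) ^ (-N)) := by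
          have := key1
          rw [hPdef, hWxdef, hcstdef]
          calc (2 * π * Real.sinh (2 * t)) ^ (-(d : ℝ) / 2) *
              (Real.sqrt t * ((‖x + y‖ + Real.sqrt t) * T + (‖x - y‖ + Real.sqrt t) * K)) *
              Real.exp (-(‖x + y‖ ^ 2 * T + ‖x - y‖ ^ 2 * K) / 4) ≤
              (4 * Real.exp 4 * Real.exp (1 / 16) * Real.exp (2 * (9 * N ^ 2 + N + 1)) *
                (2 * Real.exp 1 + (4 * (d : ℝ)) ^ ((d : ℝ) / 2))) *
              t ^ (-(d : ℝ) / 2) * Real.exp (-(‖x - y‖ ^ 2 / (32 * t))) *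
              (1 + Real.sqrt t / rho x) ^ (-N) * (1 + Real.sqrt t / rho y) ^ (-N) := this
            _ = (4 * Real.exp 4 * Real.exp (1 / 16) * Real.exp (2 * (9 * N ^ 2 + N + 1)) *
                (2 * Real.exp 1 + (4 * (d : ℝ)) ^ ((d : ℝ) / 2))) *
              (t ^ (-(d : ℝ) / 2) * Real.exp (-(‖x - y‖ ^ 2 / (32 * t))) *
              (1 + Real.sqrt t / rho x) ^ (-N) * (1 + Real.sqrt t / rho y) ^ (-N)) := by ring
      _ = cst * REST := by rw [hRESTdef]
  have ekey2 : P * (Real.sqrt t * Wh) * Real.exp (-(1/4) * Qh) ≤ cst * REST := by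
    have earg : Real.exp (-(1/4) * Qh) = Real.exp (-(Qh) / 4) := by
      congr 1; ring
    rw [earg, hQh]
    calc P * (Real.sqrt t * Wh) * Real.exp (-(‖x + h + y‖ ^ 2 * T + ‖x + h - y‖ ^ 2 * K) / 4)
        ≤ cst * (t ^ (-(d : ℝ) / 2) * Real.exp (-(‖x - y‖ ^ 2 / (32 * t))) *
          (1 + Real.sqrt t / rho x) ^ (-N) * (1 + Real.sqrt t / rho y) ^ (-N)) := by
          have := key2
          rw [hPdef, hWhdef, hcstdef]
          calc (2 * π * Real.sinh (2 * t)) ^ (-(d : ℝ) / 2) *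
              (Real.sqrt t * ((‖x + h + y‖ + Real.sqrt t) * T + (‖x + h - y‖ + Real.sqrt t) * K)) *
              Real.exp (-(‖x + h + y‖ ^ 2 * T + ‖x + h - y‖ ^ 2 * K) / 4) ≤
              (4 * Real.exp 4 * Real.exp (1 / 16) * Real.exp (2 * (9 * N ^ 2 + N + 1)) *
                (2 * Real.exp 1 + (4 * (d : ℝ)) ^ ((d : ℝ) / 2))) *
              t ^ (-(d : ℝ) / 2) * Real.exp (-(‖x - y‖ ^ 2 / (32 * t))) *
              (1 + Real.sqrt t / rho x) ^ (-N) * (1 + Real.sqrt t / rho y) ^ (-N) := this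
            _ = (4 * Real.exp 4 * Real.exp (1 / 16) * Real.exp (2 * (9 * N ^ 2 + N + 1)) *
                (2 * Real.exp 1 + (4 * (d : ℝ)) ^ ((d : ℝ) / 2))) *
              (t ^ (-(d : ℝ) / 2) * Real.exp (-(‖x - y‖ ^ 2 / (32 * t))) *
              (1 + Real.sqrt t / rho x) ^ (-N) * (1 + Real.sqrt t / rho y) ^ (-N)) := by ring
      _ = cst * REST := by rw [hRESTdef]
  -- main chain
  have hmain : |heatKernel t (x + h) y - heatKernel t x y| ≤ (‖h‖ / Real.sqrt t) * (cst * REST) := by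
    have e1pos : (0:ℝ) < Real.exp (-(1/4) * Qh) := Real.exp_pos _
    have e2pos : (0:ℝ) < Real.exp (-(1/4) * Qx) := Real.exp_pos _
    calc |heatKernel t (x + h) y - heatKernel t x y|
        = P * |Real.exp (-(1/4) * Qh) - Real.exp (-(1/4) * Qx)| := by
          rw [hkh, hkx, ← mul_sub, abs_mul, abs_of_nonneg hP.le]
      _ ≤ P * ((|Qh - Qx| / 4) * (Real.exp (-(1/4) * Qh) + Real.exp (-(1/4) * Qx))) :=
          mul_le_mul_of_nonneg_left habs hP.le
      _ ≤ P * (((‖h‖ * W) / 4) * (Real.exp (-(1/4) * Qh) + Real.exp (-(1/4) * Qx))) := by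
          apply mul_le_mul_of_nonneg_left _ hP.le
          apply mul_le_mul_of_nonneg_right _ (by positivity)
          apply div_le_div_of_nonneg_right ?_ (by norm_num)
          exact hq
      _ = (‖h‖ / 4) * (P * W * Real.exp (-(1/4) * Qh)) +
          (‖h‖ / 4) * (P * W * Real.exp (-(1/4) * Qx)) := by ring
      _ ≤ (‖h‖ / 4) * (P * (2 * Wh) * Real.exp (-(1/4) * Qh)) +
          (‖h‖ / 4) * (P * (2 * Wx) * Real.exp (-(1/4) * Qx)) := by
          apply add_le_add
          · apply mul_le_mul_of_nonneg_left _ (by positivity)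
            apply mul_le_mul_of_nonneg_right _ e1pos.le
            exact mul_le_mul_of_nonneg_left hWWh hP.le
          · apply mul_le_mul_of_nonneg_left _ (by positivity)
            apply mul_le_mul_of_nonneg_right _ e2pos.le
            exact mul_le_mul_of_nonneg_left hWWx hP.le
      _ = (‖h‖ / (2 * Real.sqrt t)) * (P * (Real.sqrt t * Wh) * Real.exp (-(1/4) * Qh)) +
          (‖h‖ / (2 * Real.sqrt t)) * (P * (Real.sqrt t * Wx) * Real.exp (-(1/4) * Qx)) := by
          field_simp
          ring
      _ ≤ (‖h‖ / (2 * Real.sqrt t)) * (cst * REST) +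
          (‖h‖ / (2 * Real.sqrt t)) * (cst * REST) := by
          apply add_le_add
          · exact mul_le_mul_of_nonneg_left ekey2 (by positivity)
          · exact mul_le_mul_of_nonneg_left ekey1 (by positivity)
      _ = (‖h‖ / Real.sqrt t) * (cst * REST) := by
          field_simp
          ring
  -- Hölder exponent
  have hr1 : ‖h‖ / Real.sqrt t ≤ 1 := by
    rw [div_le_one hst]; exact hhle
  have hrfin : ‖h‖ / Real.sqrt t ≤ (‖h‖ / Real.sqrt t) ^ ((1:ℝ)/2) := by
    rcases eq_or_lt_of_le (show (0:ℝ) ≤ ‖h‖ / Real.sqrt t by positivity) with h0 | h0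
    · rw [← h0]
      exact Real.rpow_nonneg le_rfl _
    · calc ‖h‖ / Real.sqrt t = (‖h‖ / Real.sqrt t) ^ (1:ℝ) := (Real.rpow_one _).symm
        _ ≤ (‖h‖ / Real.sqrt t) ^ ((1:ℝ)/2) :=
            Real.rpow_le_rpow_of_exponent_ge h0 hr1 (by norm_num)
  have hgauss : Real.exp (-(‖x - y‖ ^ 2 / (32 * t))) = Real.exp (-(1/32) * ‖x - y‖ ^ 2 / t) := by
    congr 1; ring
  calc |heatKernel t (x + h) y - heatKernel t x y|
      ≤ (‖h‖ / Real.sqrt t) * (cst * REST) := hmain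
    _ ≤ (‖h‖ / Real.sqrt t) ^ ((1:ℝ)/2) * (cst * REST) :=
        mul_le_mul_of_nonneg_right hrfin (by positivity)
    _ = cst * (‖h‖ / Real.sqrt t) ^ ((1:ℝ)/2) * t ^ (-(d : ℝ) / 2) *
        Real.exp (-(1/32) * ‖x - y‖ ^ 2 / t) *
        (1 + Real.sqrt t / rho x) ^ (-N) * (1 + Real.sqrt t / rho y) ^ (-N) := by
        rw [hRESTdef, ← hgauss]
        ring


end Hermite
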